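/- arXiv:2411.02705 — 2 statements merged into one kernel-verified Lean document; each statement's English description precedes it below -/
import Mathlib

section
/- Let 3 ≤ a ≤ b, both a and b even, and b > 3a/2 − 2. Then there exists a weighted graph G = (L,H) on exactly a+b+1 vertices with L a-regular and triangle-free (girth of L at least 4), H b-regular, and disjoint edge sets, whose girth as a weighted graph is 4. -/
/-!
Take `H = Lᶜ` for an `a`-regular triangle-free graph `L` on `n = a + b + 1` vertices; then `H` is
`b`-regular and `L ⊔ H` is complete. A triangle of `L ⊔ H` cannot lie in `L`, so it weighs at
least `1 + 1 + 2`, every longer cycle weighs at least its length `≥ 4`, and a path `u - x - y` in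
`L` closes up to a triangle of weight exactly `4`.

With `a = 2t` the hypotheses give `n ≥ 5t`, and such an `L` exists for every `n ≥ 5t`. For
`n ≥ 6t - 2` take the circulant graph on `ℤ/n` with jumps `±1, ±3, …, ±(2t-1)`: a signed sum of
three jumps is odd and less than `n` in absolute value, so never `0` mod `n`. For `5t ≤ n ≤ 6t`
take a blow-up of the pentagon with parts of sizes `2t-q, t, q, q, t` (`q = n - 4t`), where the
two parts of size `q` span a `t`-regular bipartite graph and all other consecutive parts are
completely joined.
-/

open Classical in
/-- Weight of a walk in `L ⊔ H`: light edges (in `L`) weigh 1, heavy edges weigh 2. -/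
noncomputable def wWeight {V : Type*} (L H : SimpleGraph V) {u : V}
    (w : (L ⊔ H).Walk u u) : ℕ :=
  (w.edges.map fun e => if e ∈ L.edgeSet then 1 else 2).sum

/-- `(L,H)` is an `(a,b)`-regular weighted graph of girth `g`. -/
def IsWGraph {V : Type*} (L H : SimpleGraph V) (a b g : ℕ) : Prop :=
  Disjoint L H ∧
  (∀ v, (L.neighborSet v).ncard = a) ∧
  (∀ v, (H.neighborSet v).ncard = b) ∧
  (∃ (u : V) (w : (L ⊔ H).Walk u u), w.IsCycle ∧ wWeight L H w = g) ∧
  (∀ (u : V) (w : (L ⊔ H).Walk u u), w.IsCycle → g ≤ wWeight L H w)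

open SimpleGraph

section WeightedGirth

variable {V : Type*} {L H : SimpleGraph V} {u : V}

open Classical in
theorem wWeight_eq_length_add_countP (w : (L ⊔ H).Walk u u) :
    wWeight L H w = w.length + w.edges.countP (· ∉ L.edgeSet) := by
  rw [wWeight, ← w.length_edges]
  induction w.edges with
  | nil => rfl
  | cons e l ih => by_cases he : e ∈ L.edgeSet <;> simp [he, ih] <;> omega

theorem length_le_wWeight (w : (L ⊔ H).Walk u u) : w.length ≤ wWeight L H w := by
  rw [wWeight_eq_length_add_countP]
  omega

theorem length_lt_wWeight_of_mem_edges {w : (L ⊔ H).Walk u u} {e : Sym2 V} (he : e ∈ w.edges)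
    (heL : e ∉ L.edgeSet) : w.length < wWeight L H w := by
  classical
  rw [wWeight_eq_length_add_countP, Nat.lt_add_right_iff_pos, List.countP_pos_iff]
  exact ⟨e, he, by simpa using heL⟩

theorem four_le_wWeight (hL : L.CliqueFree 3) {w : (L ⊔ H).Walk u u} (hw : w.IsCycle) :
    4 ≤ wWeight L H w := by
  rcases hw.three_le_length.eq_or_lt with h3 | h4
  · by_cases hwL : ∀ e ∈ w.edges, e ∈ L.edgeSet
    · obtain ⟨s, hs⟩ := is3Clique_iff_exists_cycle_length_three.2
        ⟨u, w.transfer L hwL, hw.transfer hwL, by rw [w.length_transfer, h3]⟩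
      exact (hL s hs).elim
    · push Not at hwL
      obtain ⟨e, he, heL⟩ := hwL
      have := length_lt_wWeight_of_mem_edges he heL
      omega
  · exact h4.trans_le (length_le_wWeight w)

theorem exists_isCycle_wWeight_eq_four {x y z : V} (hxy : L.Adj x y) (hyz : L.Adj y z)
    (hxz : Lᶜ.Adj x z) : ∃ (u : V) (w : (L ⊔ Lᶜ).Walk u u), w.IsCycle ∧ wWeight L Lᶜ w = 4 := by
  classical
  let w : (L ⊔ Lᶜ).Walk x x :=
    .cons (Or.inl hxy) (.cons (Or.inl hyz) (.cons (Or.inr hxz.symm) .nil))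
  refine ⟨x, w, ?_, ?_⟩
  · simp [w, Walk.cons_isCycle_iff, Walk.cons_isPath_iff, hxy.ne, hyz.ne, hxz.ne, hxy.ne.symm,
      hxz.ne.symm]
  · have : s(z, x) ∉ L.edgeSet := fun h => hxz.2 (L.adj_symm h)
    simp [wWeight, w, hxy, hyz, this]

theorem ncard_neighborSet_compl [Finite V] (L : SimpleGraph V) (v : V) :
    (Lᶜ.neighborSet v).ncard = Nat.card V - 1 - (L.neighborSet v).ncard := by
  rw [neighborSet_compl, Set.ncard_sdiff (by simp), Set.ncard_compl, Set.ncard_singleton]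
  omega

theorem isWGraph_compl [Finite V] {a b : ℕ} (hV : Nat.card V = a + b + 1)
    (hL : ∀ v, (L.neighborSet v).ncard = a) (ha : 2 ≤ a) (hL3 : L.CliqueFree 3) :
    IsWGraph L Lᶜ a b 4 := by
  classical
  refine ⟨disjoint_compl_right, hL, fun v => ?_, ?_, fun _ _ hw => four_le_wWeight hL3 hw⟩
  · rw [ncard_neighborSet_compl, hL, hV]
    omega
  · obtain ⟨x⟩ : Nonempty V := (Nat.card_pos_iff.1 (by omega)).1
    have hx : 1 < (L.neighborSet x).ncard := by rw [hL x]; omega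
    obtain ⟨u, y, hu, hy, huy⟩ := (Set.one_lt_ncard_iff (Set.toFinite _)).1 hx
    have hnuy : ¬L.Adj u y := fun h =>
      hL3 {u, x, y} (is3Clique_triple_iff.2 ⟨L.adj_symm hu, h, hy⟩)
    exact exists_isCycle_wWeight_eq_four (L.adj_symm hu) hy ⟨huy, hnuy⟩

end WeightedGirth

theorem Set.ncard_eq_ncard_preimage_inl_add_ncard_preimage_inr {α β : Type*} [Finite α]
    [Finite β] (s : Set (α ⊕ β)) : s.ncard = (Sum.inl ⁻¹' s).ncard + (Sum.inr ⁻¹' s).ncard := by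
  conv_lhs => rw [← Set.image_preimage_inl_union_image_preimage_inr s]
  rw [Set.ncard_union_eq (by simp [Set.disjoint_left]),
    Set.ncard_image_of_injective _ Sum.inl_injective,
    Set.ncard_image_of_injective _ Sum.inr_injective]

theorem ZMod.intCast_ne_zero_of_odd {n : ℕ} {x : ℤ} (hx : Odd x) (hxn : |x| < n) :
    (x : ZMod n) ≠ 0 := by
  intro h
  rw [ZMod.intCast_zmod_eq_zero_iff_dvd] at h
  rw [Int.eq_zero_of_abs_lt_dvd h hxn] at hx
  exact Int.not_odd_zero hx

def oddJumps (n t : ℕ) : Finset (ZMod n) :=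
  (Finset.range (2 * t)).image fun k : ℕ => ((2 * k + 1 - 2 * t : ℤ) : ZMod n)

section OddJumps
variable {n t : ℕ}

theorem exists_odd_of_mem_oddJumps {s : ZMod n} (hs : s ∈ oddJumps n t) :
    ∃ j : ℤ, Odd j ∧ |j| < 2 * t ∧ (j : ZMod n) = s := by
  obtain ⟨k, hk, rfl⟩ := Finset.mem_image.1 hs
  rw [Finset.mem_range] at hk
  exact ⟨2 * k + 1 - 2 * t, ⟨k - t, by ring⟩, abs_lt.2 ⟨by omega, by omega⟩, rfl⟩

theorem neg_mem_oddJumps {s : ZMod n} (hs : s ∈ oddJumps n t) : -s ∈ oddJumps n t := by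
  obtain ⟨k, hk, rfl⟩ := Finset.mem_image.1 hs
  rw [Finset.mem_range] at hk
  refine Finset.mem_image.2 ⟨2 * t - 1 - k, Finset.mem_range.2 (by omega), ?_⟩
  push_cast [Nat.cast_sub (by omega : k ≤ 2 * t - 1), Nat.cast_sub (by omega : 1 ≤ 2 * t)]
  ring

theorem zero_notMem_oddJumps (hn : 2 * t ≤ n) : (0 : ZMod n) ∉ oddJumps n t := fun h => by
  obtain ⟨j, hj, hjt, hj0⟩ := exists_odd_of_mem_oddJumps h
  exact ZMod.intCast_ne_zero_of_odd hj (by omega) hj0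

theorem add_notMem_oddJumps (hn : 6 * t ≤ n + 2) {x y : ZMod n} (hx : x ∈ oddJumps n t)
    (hy : y ∈ oddJumps n t) : x + y ∉ oddJumps n t := fun hxy => by
  obtain ⟨i, hi, hit, rfl⟩ := exists_odd_of_mem_oddJumps hx
  obtain ⟨j, hj, hjt, rfl⟩ := exists_odd_of_mem_oddJumps hy
  obtain ⟨k, hk, hkt, hijk⟩ := exists_odd_of_mem_oddJumps hxy
  rw [abs_lt] at hit hjt hkt
  refine ZMod.intCast_ne_zero_of_odd (n := n) ((hi.add_odd hj).sub_odd hk)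
    (abs_lt.2 ⟨by omega, by omega⟩) ?_
  push_cast
  rw [hijk, sub_self]

theorem card_oddJumps (hn : 4 * t ≤ n + 1) : (oddJumps n t).card = 2 * t := by
  rw [oddJumps, Finset.card_image_of_injOn, Finset.card_range]
  intro k hk l hl hkl
  simp only [Finset.coe_range, Set.mem_Iio] at hk hl
  rw [ZMod.intCast_eq_intCast_iff_dvd_sub] at hkl
  have := Int.eq_zero_of_abs_lt_dvd hkl (abs_lt.2 ⟨by omega, by omega⟩)
  omega

end OddJumps

namespace SimpleGraph

theorem CliqueFree.of_hom {α β : Type*} {G : SimpleGraph α} {H : SimpleGraph β} {n : ℕ}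
    (f : G →g H) (hH : H.CliqueFree n) : G.CliqueFree n := by
  classical
  intro s hs
  have hinj : Set.InjOn f s := fun x hx y hy hxy =>
    by_contra fun hne => (f.map_adj (hs.isClique hx hy hne)).ne hxy
  refine hH (s.image f) ⟨?_, ?_⟩
  · rw [Finset.coe_image]
    rintro _ ⟨x, hx, rfl⟩ _ ⟨y, hy, rfl⟩ hne
    exact f.map_adj (hs.isClique hx hy (ne_of_apply_ne f hne))
  · rw [Finset.card_image_of_injOn hinj, hs.card_eq]

theorem cycleGraph_five_cliqueFree_three : (cycleGraph 5).CliqueFree 3 := by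
  classical
  intro s hs
  obtain ⟨a, b, c, hab, hac, hbc, -⟩ := is3Clique_iff.1 hs
  revert hab hac hbc
  simp only [cycleGraph_adj]
  revert a b c
  decide

section Pentagon
variable {A B X Y C : Type*}

def pentagonRel (R : X → Y → Prop) : A ⊕ B ⊕ X ⊕ Y ⊕ C → A ⊕ B ⊕ X ⊕ Y ⊕ C → Prop
  | .inl _, .inr (.inl _) => True
  | .inr (.inl _), .inr (.inr (.inl _)) => True
  | .inr (.inr (.inl x)), .inr (.inr (.inr (.inl y))) => R x y
  | .inr (.inr (.inr (.inl _))), .inr (.inr (.inr (.inr _))) => True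
  | .inr (.inr (.inr (.inr _))), .inl _ => True
  | _, _ => False

variable (A B C) in
def pentagonBlowup (R : X → Y → Prop) : SimpleGraph (A ⊕ B ⊕ X ⊕ Y ⊕ C) :=
  fromRel (pentagonRel R)

def pentagonBlowup.part : A ⊕ B ⊕ X ⊕ Y ⊕ C → Fin 5
  | .inl _ => 0
  | .inr (.inl _) => 1
  | .inr (.inr (.inl _)) => 2
  | .inr (.inr (.inr (.inl _))) => 3
  | .inr (.inr (.inr (.inr _))) => 4

variable (A B C) in
def pentagonBlowup.toCycleGraph (R : X → Y → Prop) :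
    pentagonBlowup A B C R →g cycleGraph 5 where
  toFun := part
  map_rel' {v w} h := by
    rcases v with _ | _ | _ | _ | _ <;> rcases w with _ | _ | _ | _ | _ <;>
      simp_all [pentagonBlowup, pentagonRel, part, cycleGraph_adj] <;> decide

theorem pentagonBlowup_cliqueFree_three (R : X → Y → Prop) :
    (pentagonBlowup A B C R).CliqueFree 3 :=
  CliqueFree.of_hom (pentagonBlowup.toCycleGraph A B C R) cycleGraph_five_cliqueFree_three

theorem ncard_neighborSet_pentagonBlowup [Finite A] [Finite B] [Finite X] [Finite Y] [Finite C]
    {R : X → Y → Prop} {k : ℕ}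
    (hB : Nat.card B = k) (hC : Nat.card C = k) (hAX : Nat.card A + Nat.card X = 2 * k)
    (hAY : Nat.card A + Nat.card Y = 2 * k) (hRX : ∀ x, {y | R x y}.ncard = k)
    (hRY : ∀ y, {x | R x y}.ncard = k) (v : A ⊕ B ⊕ X ⊕ Y ⊕ C) :
    ((pentagonBlowup A B C R).neighborSet v).ncard = 2 * k := by
  simp only [Set.ncard_eq_ncard_preimage_inl_add_ncard_preimage_inr (β := B ⊕ X ⊕ Y ⊕ C),
    Set.ncard_eq_ncard_preimage_inl_add_ncard_preimage_inr (β := X ⊕ Y ⊕ C),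
    Set.ncard_eq_ncard_preimage_inl_add_ncard_preimage_inr (β := Y ⊕ C),
    Set.ncard_eq_ncard_preimage_inl_add_ncard_preimage_inr (α := Y)]
  rcases v with _ | _ | x | y | _ <;>
    simp [Set.preimage, pentagonBlowup, pentagonRel, Set.ncard_univ, hRX, hRY] <;> omega

end Pentagon

section Circulant
variable {G : Type*} [AddGroup G] {s : Set G}

theorem circulantGraph_adj_iff_sub_mem (hs : ∀ x ∈ s, -x ∈ s) (h0 : (0 : G) ∉ s) {u v : G} :
    (circulantGraph s).Adj u v ↔ v - u ∈ s := by
  rw [circulantGraph_adj]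
  refine ⟨fun ⟨_, h⟩ => h.elim (fun h => by simpa using hs _ h) id, fun h => ⟨?_, Or.inr h⟩⟩
  rintro rfl
  exact h0 (by simpa using h)

theorem ncard_neighborSet_circulantGraph (hs : ∀ x ∈ s, -x ∈ s) (h0 : (0 : G) ∉ s) (v : G) :
    ((circulantGraph s).neighborSet v).ncard = s.ncard := by
  have : (circulantGraph s).neighborSet v = Equiv.subRight v ⁻¹' s := by
    ext w
    exact circulantGraph_adj_iff_sub_mem hs h0
  rw [this, Set.ncard_preimage_of_injective_subset_range (Equiv.injective _) (by simp)]

theorem circulantGraph_cliqueFree_three (hs : ∀ x ∈ s, -x ∈ s) (h0 : (0 : G) ∉ s)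
    (hsum : ∀ x ∈ s, ∀ y ∈ s, x + y ∉ s) : (circulantGraph s).CliqueFree 3 := by
  classical
  intro t ht
  obtain ⟨u, v, w, huv, huw, hvw, -⟩ := is3Clique_iff.1 ht
  rw [circulantGraph_adj_iff_sub_mem hs h0] at huv huw hvw
  exact hsum _ hvw _ huv (by simpa using huw)

variable (s) in
theorem ncard_setOf_sub_mem_left (x : G) : {y | y - x ∈ s}.ncard = s.ncard :=
  Set.ncard_preimage_of_injective_subset_range sub_left_injective
    fun g _ => ⟨g + x, add_sub_cancel_right g x⟩

variable (s) in
theorem ncard_setOf_sub_mem_right (y : G) : {x | y - x ∈ s}.ncard = s.ncard :=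
  Set.ncard_preimage_of_injective_subset_range sub_right_injective
    fun g _ => ⟨-g + y, by simp [sub_eq_add_neg, ← add_assoc]⟩

end Circulant

theorem ncard_neighborSet_circulantGraph_oddJumps {n t : ℕ} (hn : 4 * t ≤ n + 1) (v : ZMod n) :
    ((circulantGraph (oddJumps n t : Set (ZMod n))).neighborSet v).ncard = 2 * t := by
  rw [ncard_neighborSet_circulantGraph (fun _ => neg_mem_oddJumps)
    (zero_notMem_oddJumps (by omega)), Set.ncard_coe_finset, card_oddJumps hn]

theorem circulantGraph_oddJumps_cliqueFree_three {n t : ℕ} (hn : 6 * t ≤ n + 2) :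
    (circulantGraph (oddJumps n t : Set (ZMod n))).CliqueFree 3 :=
  circulantGraph_cliqueFree_three (fun _ => neg_mem_oddJumps) (zero_notMem_oddJumps (by omega))
    fun _ hx _ hy => add_notMem_oddJumps hn hx hy

theorem exists_fin_of_regular_cliqueFree_three {V : Type*} [Finite V] {n d : ℕ}
    (hV : Nat.card V = n) (G : SimpleGraph V) (hG : ∀ v, (G.neighborSet v).ncard = d)
    (hG3 : G.CliqueFree 3) :
    ∃ L : SimpleGraph (Fin n), (∀ v, (L.neighborSet v).ncard = d) ∧ L.CliqueFree 3 := by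
  let e := Finite.equivFinOfCardEq hV
  refine ⟨G.map e, fun v => ?_, hG3.comap (Iso.map e G).isContained'⟩
  rw [neighborSet_map_equiv,
    Set.ncard_preimage_of_injective_subset_range e.symm.injective (by simp), hG]

theorem exists_regular_cliqueFree_three_of_le_six_mul {t n : ℕ} (ht : 1 ≤ t) (hn : 5 * t ≤ n)
    (hn' : n ≤ 6 * t) :
    ∃ L : SimpleGraph (Fin n), (∀ v, (L.neighborSet v).ncard = 2 * t) ∧ L.CliqueFree 3 := by
  set q := n - 4 * t
  have : NeZero q := ⟨by omega⟩
  obtain ⟨S, -, hS⟩ := Finset.exists_subset_card_eq (s := (Finset.univ : Finset (ZMod q)))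
    (n := t) (by simp; omega)
  refine exists_fin_of_regular_cliqueFree_three ?_
    (pentagonBlowup (Fin (2 * t - q)) (Fin t) (Fin t) fun x y : ZMod q => y - x ∈ S)
    (ncard_neighborSet_pentagonBlowup (by simp) (by simp) (by simp; omega) (by simp; omega)
      (fun x => ?_) (fun y => ?_)) (pentagonBlowup_cliqueFree_three _)
  · simp
    omega
  · rw [← hS, ← Set.ncard_coe_finset]
    exact ncard_setOf_sub_mem_left _ x
  · rw [← hS, ← Set.ncard_coe_finset]
    exact ncard_setOf_sub_mem_right _ y

theorem exists_regular_cliqueFree_three {t n : ℕ} (ht : 1 ≤ t) (hn : 5 * t ≤ n) :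
    ∃ L : SimpleGraph (Fin n), (∀ v, (L.neighborSet v).ncard = 2 * t) ∧ L.CliqueFree 3 := by
  rcases le_or_gt n (6 * t) with hn6 | hn6
  · exact exists_regular_cliqueFree_three_of_le_six_mul ht hn hn6
  · have : NeZero n := ⟨by omega⟩
    exact exists_fin_of_regular_cliqueFree_three (Nat.card_zmod n) _
      (ncard_neighborSet_circulantGraph_oddJumps (by omega))
      (circulantGraph_oddJumps_cliqueFree_three (by omega))

end SimpleGraph

theorem stmt_14_general (a b : ℕ) (ha : 3 ≤ a)
    (hae : a % 2 = 0) (hbig : 3 * a / 2 - 2 < b) :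
    ∃ L H : SimpleGraph (Fin (a + b + 1)),
      IsWGraph L H a b 4 ∧ L.CliqueFree 3 := by
  obtain ⟨L, hL, hL3⟩ := exists_regular_cliqueFree_three (t := a / 2) (n := a + b + 1)
    (by omega) (by omega)
  rw [show 2 * (a / 2) = a by omega] at hL
  exact ⟨L, Lᶜ, isWGraph_compl (by simp) hL (by omega) hL3, hL3⟩

/-- For `3 ≤ a ≤ b` both even with `b > 3a/2 - 2`, there is an `(a,b)`-regular
weighted graph of girth 4 on exactly `a+b+1` vertices whose light subgraph is
triangle-free. -/
theorem stmt_14 (a b : ℕ) (ha : 3 ≤ a) (hab : a ≤ b)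
    (hae : a % 2 = 0) (hbe : b % 2 = 0) (hbig : 3 * a / 2 - 2 < b) :
    ∃ L H : SimpleGraph (Fin (a + b + 1)),
      IsWGraph L H a b 4 ∧ L.CliqueFree 3 :=
  stmt_14_general a b ha hae hbig
end

section
/- For every integer b ≥ 1, the minimum order of a weighted graph G = (L,H) with L 1-regular, H b-regular, disjoint edge sets, and girth 6 (minimum cycle weight 6 with L-edges weight 1 and H-edges weight 2) is exactly 2b + 2. In particular, taking H to be the disjoint union of two copies of K_{b+1} and L a perfect matching between them achieves the bound. -/
/-! Lower bound: if `uv` is an `L`-edge, the `H`-neighbourhoods of `u` and `v` are disjoint (a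
common neighbour would close a triangle of weight `1 + 2 + 2 = 5`) and miss `u` and `v`, so there
are at least `2b + 2` vertices.

Construction: on two copies of `K_{b+1}` joined by the matching `inl i — inr i`, light edges switch
sides and heavy edges do not, so a cycle has an even number `ℓ` of light edges. Since `L` is a
matching, the step after a light step of a cycle is heavy, so `2ℓ ≤ length`. The weight
`2 · length - ℓ` of a cycle is therefore at least `6` (for a triangle `ℓ ≤ 1` forces `ℓ = 0`). -/

open SimpleGraph Finset

section WeightedGraph

variable {V : Type*} {L H : SimpleGraph V}

open Classical in
noncomputable def lightSteps (L : SimpleGraph V) {u v : V} (p : (L ⊔ H).Walk u v) : Finset ℕ :=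
  {i ∈ range p.length | L.Adj (p.getVert i) (p.getVert (i + 1))}

open Classical in
lemma sum_edges_weight_eq_sum_range {u v : V} (p : (L ⊔ H).Walk u v) :
    (p.edges.map fun e => if e ∈ L.edgeSet then 1 else 2).sum =
      ∑ i ∈ range p.length, if L.Adj (p.getVert i) (p.getVert (i + 1)) then 1 else 2 := by
  induction p with
  | nil => simp
  | cons h p ih =>
    rw [Walk.edges_cons, List.map_cons, List.sum_cons, ih, Walk.length_cons, sum_range_succ']
    simp only [Walk.getVert_cons_succ, Walk.getVert_zero, mem_edgeSet]
    exact add_comm _ _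

lemma wWeight_add_card_lightSteps {u : V} (c : (L ⊔ H).Walk u u) :
    wWeight L H c + #(lightSteps L c) = 2 * c.length := by
  classical
  have := card_filter_add_card_filter_not
    (s := range c.length) (fun i => L.Adj (c.getVert i) (c.getVert (i + 1)))
  rw [card_range] at this
  rw [wWeight, sum_edges_weight_eq_sum_range, sum_ite, sum_const, sum_const, smul_eq_mul,
    smul_eq_mul, mul_one, lightSteps]
  omega

open Classical in
lemma side_getVert_eq_iff_even (side : V → Bool) (hL : ∀ ⦃x y⦄, L.Adj x y → side y = !side x)
    (hH : ∀ ⦃x y⦄, H.Adj x y → side y = side x) {u v : V} (p : (L ⊔ H).Walk u v) {k : ℕ}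
    (hk : k ≤ p.length) : side (p.getVert k) = side u ↔
      Even #{i ∈ range k | L.Adj (p.getVert i) (p.getVert (i + 1))} := by
  induction k with
  | zero => simp
  | succ k ih =>
    have hadj := p.adj_getVert_succ (by omega : k < p.length)
    rw [range_add_one, filter_insert]
    by_cases hlight : L.Adj (p.getVert k) (p.getVert (k + 1))
    · rw [if_pos hlight, card_insert_of_notMem (by simp), Nat.even_add_one, ← ih (by omega),
        hL hlight]
      cases side (p.getVert k) <;> cases side u <;> simp
    · rw [if_neg hlight, ← ih (by omega), hH (hadj.resolve_left hlight)]

lemma even_card_lightSteps (side : V → Bool) (hL : ∀ ⦃x y⦄, L.Adj x y → side y = !side x)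
    (hH : ∀ ⦃x y⦄, H.Adj x y → side y = side x) {u : V} (c : (L ⊔ H).Walk u u) :
    Even #(lightSteps L c) := by
  classical
  rw [lightSteps, ← side_getVert_eq_iff_even side hL hH c le_rfl, Walk.getVert_length]

lemma two_mul_card_lightSteps_le (hmatch : ∀ ⦃x y z⦄, L.Adj x y → L.Adj x z → y = z)
    {u : V} {c : (L ⊔ H).Walk u u} (hc : c.IsCycle) :
    2 * #(lightSteps L c) ≤ c.length := by
  classical
  let next (i : ℕ) : ℕ := if i + 1 = c.length then 0 else i + 1
  have hmaps : Set.MapsTo next (lightSteps L c) ↑(range c.length \ lightSteps L c) := by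
    intro i hi
    simp only [lightSteps, coe_filter, Set.mem_ofPred_eq, mem_range] at hi
    simp only [lightSteps, coe_sdiff, coe_range, coe_filter, Set.mem_sdiff, Set.mem_Iio,
      Set.mem_ofPred_eq, next]
    split_ifs with hlast
    · refine ⟨by omega, fun ⟨_, hfirst⟩ => hc.snd_ne_penultimate (hmatch (x := u) ?_ ?_)⟩
      · simpa using hfirst
      · rw [hlast, Walk.getVert_length] at hi
        rw [Walk.penultimate, show c.length - 1 = i by omega]
        exact hi.2.symm
    · refine ⟨by omega, fun ⟨_, hnext⟩ => hc.getVert_sub_one_ne_getVert_add_one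
        (i := i + 1) (by omega) ?_⟩
      exact hmatch hi.2.symm hnext
  have hinj : Set.InjOn next (lightSteps L c) := by
    intro i hi j hj hij
    simp only [lightSteps, coe_filter, Set.mem_ofPred_eq, mem_range] at hi hj
    simp only [next] at hij
    split_ifs at hij <;> omega
  have := card_le_card_of_injOn next hmaps hinj
  unfold lightSteps at this ⊢
  rw [card_sdiff_of_subset (filter_subset _ _), card_range] at this
  omega

theorem six_le_wWeight_of_isCycle (side : V → Bool)
    (hL : ∀ ⦃x y⦄, L.Adj x y → side y = !side x) (hH : ∀ ⦃x y⦄, H.Adj x y → side y = side x)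
    (hmatch : ∀ ⦃x y z⦄, L.Adj x y → L.Adj x z → y = z)
    {u : V} {c : (L ⊔ H).Walk u u} (hc : c.IsCycle) : 6 ≤ wWeight L H c := by
  have hweight := wWeight_add_card_lightSteps c
  obtain ⟨k, hk⟩ := even_card_lightSteps side hL hH c
  have := two_mul_card_lightSteps_le hmatch hc
  have := hc.three_le_length
  omega

lemma isCycle_triangle {G : SimpleGraph V} {x y z : V} (hxy : G.Adj x y) (hyz : G.Adj y z)
    (hzx : G.Adj z x) : (Walk.cons hxy (.cons hyz (.cons hzx .nil))).IsCycle := by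
  simp [Walk.cons_isCycle_iff, hxy.ne, hyz.ne, hzx.ne, hxy.ne.symm, hzx.ne.symm]

lemma disjoint_neighborSet_of_adj (hd : Disjoint L H)
    (hgirth : ∀ (u : V) (c : (L ⊔ H).Walk u u), c.IsCycle → 6 ≤ wWeight L H c)
    {u v : V} (huv : L.Adj u v) : Disjoint (H.neighborSet u) (H.neighborSet v) := by
  refine Set.disjoint_left.2 fun w (huw : H.Adj u w) (hvw : H.Adj v w) => ?_
  have := hgirth u _ (isCycle_triangle (G := L ⊔ H) (Or.inl huv) (Or.inr hvw) (Or.inr huw.symm))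
  have hvw' := disjoint_left.1 hd.symm _ _ hvw
  have hwu' := disjoint_left.1 hd.symm _ _ huw.symm
  simp [wWeight, huv, hvw', hwu'] at this

theorem IsWGraph.two_mul_add_two_le_card [Finite V] {b : ℕ} (h : IsWGraph L H 1 b 6) :
    2 * b + 2 ≤ Nat.card V := by
  obtain ⟨hd, hL, hH, ⟨u, -⟩, hgirth⟩ := h
  obtain ⟨v, huv : L.Adj u v⟩ := Set.nonempty_of_ncard_ne_zero (by rw [hL u]; omega)
  have hv : v ∉ H.neighborSet u ∪ H.neighborSet v := by simp [disjoint_left.1 hd _ _ huv]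
  have hu : u ∉ insert v (H.neighborSet u ∪ H.neighborSet v) := by
    simp [huv.ne, disjoint_left.1 hd _ _ huv.symm]
  calc 2 * b + 2 = (insert u (insert v (H.neighborSet u ∪ H.neighborSet v))).ncard := by
        rw [Set.ncard_insert_of_notMem hu, Set.ncard_insert_of_notMem hv,
          Set.ncard_union_eq (disjoint_neighborSet_of_adj hd hgirth huv), hH, hH]
        ring
    _ ≤ Nat.card V := Set.ncard_le_card _

end WeightedGraph

section Construction

variable (α : Type*)

def crossMatching : SimpleGraph (α ⊕ α) where
  Adj u v := v = u.swap
  symm := ⟨fun u v h => by simp [h]⟩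
  loopless := ⟨fun u h => by cases u <;> simp at h⟩

variable {α}

@[simp] lemma crossMatching_adj {u v : α ⊕ α} : (crossMatching α).Adj u v ↔ v = u.swap := Iff.rfl

lemma ncard_neighborSet_crossMatching (u : α ⊕ α) :
    ((crossMatching α).neighborSet u).ncard = 1 :=
  Set.ncard_eq_one.2 ⟨u.swap, rfl⟩

lemma ncard_neighborSet_sum_top [Finite α] (u : α ⊕ α) :
    (((⊤ : SimpleGraph α) ⊕g ⊤).neighborSet u).ncard = Nat.card α - 1 := by
  cases u with
  | inl i => rw [neighborSet_sum_inl, Set.ncard_image_of_injective _ Sum.inl_injective,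
      neighborSet_top, Set.ncard_compl, Set.ncard_singleton]
  | inr i => rw [neighborSet_sum_inr, Set.ncard_image_of_injective _ Sum.inr_injective,
      neighborSet_top, Set.ncard_compl, Set.ncard_singleton]

lemma disjoint_crossMatching_sum_top : Disjoint (crossMatching α) ((⊤ : SimpleGraph α) ⊕g ⊤) :=
  disjoint_left.2 fun u _ h => by subst h; cases u <;> simp

lemma exists_isCycle_wWeight_crossMatching_eq_six [Nontrivial α] :
    ∃ (u : α ⊕ α) (c : (crossMatching α ⊔ (⊤ ⊕g ⊤)).Walk u u),
      c.IsCycle ∧ wWeight (crossMatching α) (⊤ ⊕g ⊤) c = 6 := by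
  obtain ⟨i, j, hij⟩ := exists_pair_ne α
  have a₁ : (crossMatching α ⊔ (⊤ ⊕g ⊤)).Adj (.inl i) (.inr i) := Or.inl rfl
  have a₂ : (crossMatching α ⊔ (⊤ ⊕g ⊤)).Adj (.inr i) (.inr j) := Or.inr (by simpa using hij)
  have a₃ : (crossMatching α ⊔ (⊤ ⊕g ⊤)).Adj (.inr j) (.inl j) := Or.inl rfl
  have a₄ : (crossMatching α ⊔ (⊤ ⊕g ⊤)).Adj (.inl j) (.inl i) := Or.inr (by simpa using hij.symm)
  refine ⟨_, .cons a₁ (.cons a₂ (.cons a₃ (.cons a₄ .nil))), ?_, ?_⟩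
  · simp [Walk.cons_isCycle_iff, hij, hij.symm]
  · simp [wWeight]

theorem isWGraph_crossMatching [Finite α] [Nontrivial α] :
    IsWGraph (crossMatching α) (⊤ ⊕g ⊤) 1 (Nat.card α - 1) 6 := by
  refine ⟨disjoint_crossMatching_sum_top, ncard_neighborSet_crossMatching,
    ncard_neighborSet_sum_top, exists_isCycle_wWeight_crossMatching_eq_six,
    fun _ _ hc => six_le_wWeight_of_isCycle Sum.isLeft ?_ ?_ ?_ hc⟩
  · rintro x _ rfl
    cases x <;> rfl
  · rintro (x | x) (y | y) h <;> simp_all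
  · rintro x _ _ rfl rfl
    rfl

end Construction

section Transport

variable {V W : Type*}

lemma wWeight_map {L H : SimpleGraph V} {L' H' : SimpleGraph W} (f : L ⊔ H →g L' ⊔ H')
    (hf : ∀ x y, L'.Adj (f x) (f y) ↔ L.Adj x y) {u : V} (c : (L ⊔ H).Walk u u) :
    wWeight L' H' (c.map f) = wWeight L H c := by
  classical
  rw [wWeight, wWeight, Walk.edges_map, List.map_map]
  congr 1
  refine List.map_congr_left fun e _ => ?_
  induction e using Sym2.ind with
  | _ x y => simp [hf]

lemma IsWGraph.comap (e : W ≃ V) {L H : SimpleGraph V} {a b g : ℕ} (h : IsWGraph L H a b g) :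
    IsWGraph (L.comap e) (H.comap e) a b g := by
  obtain ⟨hd, hL, hH, ⟨u, c, hc, hcg⟩, hgirth⟩ := h
  let φ : L.comap e ⊔ H.comap e ≃g L ⊔ H := Iso.comap e (L ⊔ H)
  have hncard (G : SimpleGraph V) (v : W) :
      ((G.comap e).neighborSet v).ncard = (G.neighborSet (e v)).ncard := by
    rw [neighborSet_comap, ← e.image_symm_eq_preimage,
      Set.ncard_image_of_injective _ e.symm.injective]
  refine ⟨disjoint_left.2 fun x y => disjoint_left.1 hd (e x) (e y),
    fun v => (hncard L v).trans (hL _), fun v => (hncard H v).trans (hH _),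
    ⟨φ.symm u, c.map φ.symm.toHom, hc.map φ.symm.injective, ?_⟩, fun v c' hc' => ?_⟩
  · rw [wWeight_map _ fun x y => by
      change L.Adj (e (e.symm x)) (e (e.symm y)) ↔ _
      simp, hcg]
  · rw [← wWeight_map φ.toHom fun x y => Iff.rfl]
    exact hgirth _ _ (hc'.map φ.injective)

end Transport

/-- For `b ≥ 1`, the minimum order of a `(1,b)`-regular weighted graph of girth
6 is exactly `2b + 2`; moreover the bound is attained by taking `H` to be two
disjoint copies of `K_{b+1}` (all pairs of distinct vertices on the same side
adjacent) and `L` a perfect matching between the two copies. -/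
theorem stmt_18 (b : ℕ) (hb : 1 ≤ b) :
    IsLeast {n : ℕ | ∃ L H : SimpleGraph (Fin n), IsWGraph L H 1 b 6}
      (2 * b + 2) ∧
    (∃ L H : SimpleGraph (Fin (b + 1) ⊕ Fin (b + 1)),
      (∀ u v : Fin (b + 1) ⊕ Fin (b + 1),
        H.Adj u v ↔ u ≠ v ∧ ((u.isLeft ∧ v.isLeft) ∨ (u.isRight ∧ v.isRight))) ∧
      IsWGraph L H 1 b 6 ∧
      (∀ u v : Fin (b + 1) ⊕ Fin (b + 1), L.Adj u v →
        (u.isLeft ∧ v.isRight) ∨ (u.isRight ∧ v.isLeft))) := by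
  have : Nontrivial (Fin (b + 1)) := Fin.nontrivial_iff_two_le.2 (by omega)
  have hG : IsWGraph (crossMatching (Fin (b + 1))) (⊤ ⊕g ⊤) 1 b 6 := by
    simpa using isWGraph_crossMatching (α := Fin (b + 1))
  refine ⟨⟨?_, fun n ⟨L, H, h⟩ => by simpa using h.two_mul_add_two_le_card⟩,
    crossMatching _, ⊤ ⊕g ⊤, ?_, hG, ?_⟩
  · let e : Fin (2 * b + 2) ≃ Fin (b + 1) ⊕ Fin (b + 1) :=
      (finCongr (by ring)).trans finSumFinEquiv.symm
    exact ⟨_, _, hG.comap e⟩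
  · rintro (i | i) (j | j) <;> simp
  · rintro (i | i) _ rfl <;> simp
end
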